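/- Let (W,S) be a Coxeter system with W a finite group, and let V be a finite-dimensional complex representation of W with character χ_V. Then the virtual character DL_W(χ_V) := Σ_{I ⊆ S} (−1)^{|I|} Ind_{W_I}^W ( χ_V |_{W_I} ) is equal to the character of the representation sgn ⊗ V, i.e., for every w ∈ W, Σ_{I ⊆ S} (−1)^{|I|} · (1/|W_I|) Σ_{g ∈ W, g⁻¹wg ∈ W_I} χ_V(g⁻¹wg) = (−1)^{ℓ(w)} · χ_V(w). -/

import Mathlib

/-!
Since `χ_V` is a class function, the sum over `g` is `#{g | g⁻¹ w g ∈ W_I} · χ_V(w)`, so the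
theorem reduces to Solomon's identity `F = sgn` for `F := ∑_I (-1)^|I| Ind_{W_I}^W 1`. It follows
from `‖F - sgn‖² = 0`. By Frobenius reciprocity `⟨F, sgn⟩ = |W|`, as `sgn` sums to zero over every
nontrivial `W_I`. By Mackey, `⟨Ind 1_{W_I}, Ind 1_{W_K}⟩` counts the double cosets `W_I \ W / W_K`,
and each of them contains exactly one element with no left descent in `I` and no right descent
in `K`; inclusion–exclusion over `I` and `K` then leaves only the elements all of whose simple
reflections are left and right descents, i.e. the longest element, so `⟨F, F⟩ = |W|`.

The Coxeter-theoretic input (strong exchange, deletion, uniqueness of the longest element) comes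
from Tits' action of `W` on `W × ZMod 2`, whose second coordinate records the parity of the
number of occurrences of a reflection in the inversion sequence of a word.
-/

open Finset

open Classical in
theorem sum_neg_one_pow_card_mul_ite_forall_not {ι : Type*} [Fintype ι] (p : ι → Prop) :
    ∑ I : Finset ι, (-1 : ℤ) ^ #I * (if ∀ i ∈ I, ¬ p i then 1 else 0) =
      if ∀ i, p i then 1 else 0 := by
  simp only [mul_ite, mul_one, mul_zero, sum_ite, sum_const_zero, add_zero]
  have : ({I | ∀ i ∈ I, ¬ p i} : Finset (Finset ι)) = (univ.filter (¬ p ·)).powerset := by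
    ext I
    simp [subset_iff]
  rw [this, sum_powerset_neg_one_pow_card]
  simp [filter_eq_empty_iff]

section ConjugationCounting

open Classical

variable {G : Type*} [Group G] [Fintype G]

theorem card_filter_mem_subgroup (H : Subgroup G) : #{x | x ∈ H} = Nat.card H := by
  simp [Nat.card_eq_fintype_card, Fintype.card_subtype]

theorem card_conj_mem_conj (H : Subgroup G) (g x : G) :
    #{h | h⁻¹ * (g * x * g⁻¹) * h ∈ H} = #{h | h⁻¹ * x * h ∈ H} :=
  card_equiv (Equiv.mulLeft g⁻¹) fun h ↦ by simp [mul_assoc]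

/-- Frobenius reciprocity for the trivial character of `H`, with the induced character
`w ↦ #{g | g⁻¹ w g ∈ H} / |H|`. -/
theorem sum_card_conj_mem_mul {R : Type*} [CommSemiring R] (H : Subgroup G) (f : G → R)
    (hf : ∀ g x, f (g * x * g⁻¹) = f x) :
    ∑ w, (#{g | g⁻¹ * w * g ∈ H} : R) * f w = Fintype.card G * ∑ x with x ∈ H, f x := by
  simp_rw [card_filter, Nat.cast_sum, sum_mul, Nat.cast_ite, ite_mul, Nat.cast_one, one_mul,
    Nat.cast_zero, zero_mul]
  rw [sum_comm, ← card_univ, ← nsmul_eq_mul, ← sum_const, sum_filter]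
  refine sum_congr rfl fun g _ ↦ ?_
  rw [← (MulAut.conj g).toEquiv.sum_comp]
  simp [← mul_assoc, hf]

open DoubleCoset in
theorem card_mul_mul_eq_card_conj_mem (H K : Subgroup G) {d u : G}
    (hd : d ∈ doubleCoset u H K) :
    #{p ∈ univ.filter (· ∈ H) ×ˢ univ.filter (· ∈ K) | p.1 * d * p.2 = u} =
      #{x | x ∈ H ∧ u⁻¹ * x * u ∈ K} := by
  obtain ⟨a₀, ha₀, b₀, hb₀, rfl⟩ := mem_doubleCoset.mp hd
  have key : ∀ a b, a * (a₀ * u * b₀) * b = u → u⁻¹ * (a * a₀) * u = (b₀ * b)⁻¹ := by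
    intro a b h
    rw [eq_inv_iff_mul_eq_one]
    simp only [mul_assoc] at h ⊢
    rw [h, inv_mul_cancel]
  refine card_nbij' (fun p ↦ p.1 * a₀) (fun x ↦ (x * a₀⁻¹, b₀⁻¹ * (u⁻¹ * x * u)⁻¹)) ?_ ?_ ?_ ?_
  · rintro ⟨a, b⟩ hp
    simp only [coe_filter, mem_product, mem_filter, mem_univ, true_and, Set.mem_ofPred_eq] at hp ⊢
    exact ⟨mul_mem hp.1.1 ha₀, key a b hp.2 ▸ inv_mem (mul_mem hb₀ hp.1.2)⟩
  · intro x hx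
    simp only [coe_filter, mem_product, mem_filter, mem_univ, true_and, Set.mem_ofPred_eq] at hx ⊢
    exact ⟨⟨mul_mem hx.1 (inv_mem ha₀), mul_mem (inv_mem hb₀) (inv_mem hx.2)⟩, by group⟩
  · rintro ⟨a, b⟩ hp
    simp only [coe_filter, mem_product, mem_filter, mem_univ, true_and, Set.mem_ofPred_eq] at hp
    simp [key a b hp.2]
  · intro x _
    simp

open DoubleCoset in
theorem sum_card_mem_and_conj_mem_eq (H K : Subgroup G) (D : G → Prop)
    (hD : ∀ u, ∃! d, D d ∧ d ∈ doubleCoset u H K) :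
    ∑ u, #{x | x ∈ H ∧ u⁻¹ * x * u ∈ K} = #{d | D d} * (Nat.card H * Nat.card K) := by
  have hfiber : ∀ u, #{x | x ∈ H ∧ u⁻¹ * x * u ∈ K} =
      ∑ d with D d, #{p ∈ univ.filter (· ∈ H) ×ˢ univ.filter (· ∈ K) | p.1 * d * p.2 = u} := by
    intro u
    obtain ⟨d, ⟨hdD, hdu⟩, hd⟩ := hD u
    rw [sum_eq_single_of_mem d ((mem_filter_univ d).mpr hdD), card_mul_mul_eq_card_conj_mem H K hdu]
    intro d' hd'D hne
    rw [card_eq_zero, filter_eq_empty_iff]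
    rintro ⟨a, b⟩ hab rfl
    simp only [mem_product, mem_filter, mem_univ, true_and] at hab
    exact hne (hd d' ⟨(mem_filter_univ d').mp hd'D, mem_doubleCoset.mpr
      ⟨a⁻¹, inv_mem hab.1, b⁻¹, inv_mem hab.2, by group⟩⟩)
  rw [sum_congr rfl fun u _ ↦ hfiber u, sum_comm, ← card_filter_mem_subgroup,
    ← card_filter_mem_subgroup, ← card_product, ← smul_eq_mul, ← sum_const]
  exact sum_congr rfl fun d _ ↦ (card_eq_sum_card_fiberwise (by simp)).symm

open DoubleCoset in
theorem sum_card_conj_mem_mul_card_conj_mem (H K : Subgroup G) (D : G → Prop)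
    (hD : ∀ u, ∃! d, D d ∧ d ∈ doubleCoset u H K) :
    ∑ w, #{g | g⁻¹ * w * g ∈ H} * #{g | g⁻¹ * w * g ∈ K} =
      Fintype.card G * (#{d | D d} * (Nat.card H * Nat.card K)) := by
  have := sum_card_conj_mem_mul H (fun w ↦ #{g | g⁻¹ * w * g ∈ K}) (card_conj_mem_conj K)
  simp only [Nat.cast_id] at this
  rw [this, ← sum_card_mem_and_conj_mem_eq H K D hD]
  simp_rw [card_filter, sum_filter]
  rw [sum_comm]
  simp [ite_and]

end ConjugationCounting


namespace CoxeterSystem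

variable {B W : Type*} [Group W] {M : CoxeterMatrix B} (cs : CoxeterSystem M W)

local prefix:100 "s" => cs.simple
local prefix:100 "π" => cs.wordProd
local prefix:100 "ℓ" => cs.length
local prefix:100 "ris" => cs.rightInvSeq
local prefix:100 "lis" => cs.leftInvSeq

section TitsRepresentation

open Classical

omit cs in
theorem _root_.ZMod.eq_one_iff_ne_one_of_add_eq_one {a b : ZMod 2} (h : a + b = 1) :
    a = 1 ↔ b ≠ 1 := by
  revert a b
  decide

theorem simple_mul_mul_simple_eq_simple_iff (i : B) (t : W) : s i * t * s i = s i ↔ t = s i := by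
  constructor
  · intro h
    simpa [mul_assoc] using congrArg (s i * · * s i) h
  · rintro rfl
    simp

noncomputable def titsPerm (i : B) : Equiv.Perm (W × ZMod 2) :=
  Function.Involutive.toPerm (fun p ↦ (s i * p.1 * s i, p.2 + if p.1 = s i then 1 else 0)) <| by
    rintro ⟨t, z⟩
    simp only [simple_mul_mul_simple_eq_simple_iff, add_assoc, Prod.mk.injEq]
    refine ⟨by simp [mul_assoc], ?_⟩
    split_ifs <;> simp [CharTwo.add_self_eq_zero]

theorem titsPerm_apply (i : B) (t : W) (z : ZMod 2) :
    cs.titsPerm i (t, z) = (s i * t * s i, z + if t = s i then 1 else 0) :=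
  rfl

theorem prod_map_titsPerm_apply (ω : List B) (t : W) (z : ZMod 2) :
    (ω.map cs.titsPerm).prod (t, z) = (π ω * t * (π ω)⁻¹, z + (ris ω).count t) := by
  induction ω with
  | nil => simp
  | cons i ω ih =>
    have hconj : π ω * t * (π ω)⁻¹ = s i ↔ (π ω)⁻¹ * s i * π ω = t := by
      constructor <;> intro h <;> rw [← h] <;> group
    rw [List.map_cons, List.prod_cons, Equiv.Perm.mul_apply, ih, titsPerm_apply, wordProd_cons,
      rightInvSeq, List.count_cons]
    simp only [beq_iff_eq, hconj]
    refine Prod.ext (by simp [mul_assoc]) ?_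
    split_ifs <;> simp [add_assoc]

theorem prod_map_reverse_alternatingWord {G : Type*} [Monoid G] (f : B → G) (i j : B) (p : ℕ) :
    (((alternatingWord j i (2 * p)).reverse).map f).prod = (f i * f j) ^ p := by
  induction p with
  | zero => simp [alternatingWord]
  | succ p ih =>
    rw [show 2 * (p + 1) = 2 * p + 1 + 1 by ring, alternatingWord_succ', alternatingWord_succ']
    simp only [Nat.even_add_one, even_two_mul, not_true, if_true, if_false, List.reverse_cons,
      List.map_append, List.prod_append, ih]
    simp [pow_succ, mul_assoc]

theorem wordProd_alternatingWord_odd (i j : B) (k : ℕ) :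
    π (alternatingWord i j (2 * k + 1)) = s j * (s i * s j) ^ k := by
  rw [prod_alternatingWord_eq_mul_pow]
  simp [show (2 * k + 1) / 2 = k by omega]

theorem leftInvSeq_alternatingWord (i j : B) (p : ℕ) :
    lis (alternatingWord j i (2 * p)) =
      (List.range (2 * p)).map fun k ↦ s j * (s i * s j) ^ k := by
  refine List.ext_getElem (by simp) fun k hk _ ↦ ?_
  rw [getElem_leftInvSeq_alternatingWord cs j i p k (by simpa using hk),
    wordProd_alternatingWord_odd, List.getElem_map, List.getElem_range]

theorem titsPerm_isLiftable : M.IsLiftable cs.titsPerm := by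
  intro i j
  set p := M i j
  have hπ : π (alternatingWord j i (2 * p)) = 1 := by
    simp [prod_alternatingWord_eq_mul_pow, p]
  have hperiod : ∀ k, s j * (s i * s j) ^ (p + k) = s j * (s i * s j) ^ k := fun k ↦ by
    rw [pow_add, cs.simple_mul_simple_pow, one_mul]
  ext ⟨t, z⟩ : 1
  rw [← prod_map_reverse_alternatingWord, prod_map_titsPerm_apply, wordProd_reverse, hπ,
    rightInvSeq_reverse, List.count_reverse, leftInvSeq_alternatingWord, two_mul p, List.range_add,
    List.map_append, List.map_map, Function.comp_def]
  simp [hperiod, ← two_mul, show (2 : ZMod 2) = 0 from rfl]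

noncomputable def titsRep : W →* Equiv.Perm (W × ZMod 2) :=
  cs.lift ⟨cs.titsPerm, cs.titsPerm_isLiftable⟩

theorem titsRep_wordProd (ω : List B) : cs.titsRep (π ω) = (ω.map cs.titsPerm).prod := by
  rw [wordProd, map_list_prod, List.map_map]
  congr 2
  ext1 i
  exact cs.lift_apply_simple cs.titsPerm_isLiftable i

/-- The parity of the number of occurrences of `t` in the right inversion sequence of any word
for `w` (`invParity_wordProd`); it does not depend on the word because `titsRep` is defined on
`W`. -/
noncomputable def invParity (w t : W) : ZMod 2 :=
  (cs.titsRep w (t, 0)).2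

theorem titsRep_wordProd_apply (ω : List B) (t : W) (z : ZMod 2) :
    cs.titsRep (π ω) (t, z) = (π ω * t * (π ω)⁻¹, z + (ris ω).count t) := by
  rw [titsRep_wordProd, prod_map_titsPerm_apply]

theorem invParity_wordProd (ω : List B) (t : W) : cs.invParity (π ω) t = (ris ω).count t := by
  rw [invParity, titsRep_wordProd_apply, zero_add]

theorem titsRep_apply (w t : W) (z : ZMod 2) :
    cs.titsRep w (t, z) = (w * t * w⁻¹, z + cs.invParity w t) := by
  obtain ⟨ω, rfl⟩ := cs.wordProd_surjective w
  rw [titsRep_wordProd_apply, invParity_wordProd]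

theorem invParity_mul (u v t : W) :
    cs.invParity (u * v) t = cs.invParity u (v * t * v⁻¹) + cs.invParity v t := by
  rw [invParity, map_mul, Equiv.Perm.mul_apply, titsRep_apply, titsRep_apply, zero_add, add_comm]

theorem invParity_one (t : W) : cs.invParity 1 t = 0 := by
  simpa using cs.invParity_wordProd [] t

theorem invParity_simple_self (i : B) : cs.invParity (s i) (s i) = 1 := by
  simpa using cs.invParity_wordProd [i] (s i)

variable {cs} in
theorem IsReflection.invParity_self {t : W} (ht : cs.IsReflection t) : cs.invParity t t = 1 := by
  obtain ⟨w, i, rfl⟩ := ht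
  have h₁ := cs.invParity_mul w (s i * w⁻¹) (w * s i * w⁻¹)
  have h₂ := cs.invParity_mul (s i) w⁻¹ (w * s i * w⁻¹)
  have h₃ := cs.invParity_mul w w⁻¹ (w * s i * w⁻¹)
  rw [← mul_assoc, show s i * w⁻¹ * (w * s i * w⁻¹) * (s i * w⁻¹)⁻¹ = s i by group] at h₁
  rw [show w⁻¹ * (w * s i * w⁻¹) * w⁻¹⁻¹ = s i by group] at h₂ h₃
  rw [invParity_simple_self] at h₂
  rw [mul_inv_cancel, invParity_one] at h₃
  linear_combination h₁ + h₂ - h₃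

theorem isRightInversion_of_invParity_eq_one {w t : W} (h : cs.invParity w t = 1) :
    cs.IsRightInversion w t := by
  obtain ⟨ω, hω, rfl⟩ := cs.exists_isReduced w
  rw [invParity_wordProd, ZMod.natCast_eq_one_iff_odd] at h
  exact cs.isRightInversion_of_mem_rightInvSeq hω (List.count_pos_iff.mp h.pos)

/-- The strong exchange property in parity form. -/
theorem invParity_eq_one_iff {w t : W} : cs.invParity w t = 1 ↔ cs.IsRightInversion w t := by
  refine ⟨cs.isRightInversion_of_invParity_eq_one, fun ⟨ht, hlt⟩ ↦ ?_⟩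
  have hsplit : cs.invParity w t + cs.invParity (w * t) t = 1 := by
    have := cs.invParity_mul (w * t) t t
    rw [mul_inv_cancel_right, mul_assoc, ht.mul_self, mul_one, ht.invParity_self] at this
    rw [this, add_right_comm, CharTwo.add_self_eq_zero, zero_add]
  refine (ZMod.eq_one_iff_ne_one_of_add_eq_one hsplit).mpr fun h ↦ ?_
  have := (cs.isRightInversion_of_invParity_eq_one h).2
  rw [mul_assoc, ht.mul_self, mul_one] at this
  omega

variable {cs} in
/-- The strong exchange property. -/
theorem IsReduced.mem_rightInvSeq_iff {ω : List B} (hω : cs.IsReduced ω) {t : W} :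
    t ∈ ris ω ↔ cs.IsRightInversion (π ω) t := by
  refine ⟨cs.isRightInversion_of_mem_rightInvSeq hω, fun h ↦ ?_⟩
  rw [← invParity_eq_one_iff, invParity_wordProd, ZMod.natCast_eq_one_iff_odd] at h
  exact List.count_pos_iff.mp h.pos

theorem card_isRightInversion [Fintype W] (w : W) : #{t | cs.IsRightInversion w t} = ℓ w := by
  obtain ⟨ω, hω, rfl⟩ := cs.exists_isReduced w
  have : ({t | cs.IsRightInversion (π ω) t} : Finset W) = (ris ω).toFinset := by
    ext t
    simp [hω.mem_rightInvSeq_iff]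
  rw [this, List.toFinset_card_of_nodup hω.nodup_rightInvSeq, length_rightInvSeq, hω]

end TitsRepresentation

/-- The deletion property. -/
theorem exists_sublist_isReduced_wordProd_eq (ω : List B) :
    ∃ ω', ω'.Sublist ω ∧ cs.IsReduced ω' ∧ π ω' = π ω := by
  induction ω using List.reverseRecOn with
  | nil => exact ⟨[], .refl _, by simp [IsReduced], rfl⟩
  | append_singleton ω i ih =>
    obtain ⟨δ, hδω, hδ, hπ⟩ := ih
    by_cases hδi : cs.IsReduced (δ ++ [i])
    · exact ⟨δ ++ [i], hδω.append (.refl _), hδi, by simp [wordProd_append, hπ]⟩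
    have hlen := cs.length_mul_simple (π δ) i
    have hℓδ : ℓ (π δ) = δ.length := hδ
    have hdesc : cs.IsRightDescent (π δ) i := by
      simp only [IsReduced, wordProd_append, wordProd_singleton, List.length_append,
        List.length_singleton] at hδi
      rw [IsRightDescent]
      omega
    obtain ⟨j, hj, hji⟩ := List.mem_iff_getElem.mp <|
      hδ.mem_rightInvSeq_iff.mpr ((cs.isRightInversion_simple_iff_isRightDescent _ _).mpr hdesc)
    have hdel : π δ * s i = π (δ.eraseIdx j) := by
      rw [← hji, ← List.getD_eq_getElem _ 1, wordProd_mul_getD_rightInvSeq]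
    refine ⟨δ.eraseIdx j, (δ.eraseIdx_sublist j).trans (hδω.trans (List.sublist_append_left _ _)),
      ?_, by rw [← hdel, hπ, wordProd_append, wordProd_singleton]⟩
    rw [IsReduced, ← hdel, List.length_eraseIdx_of_lt (by simpa using hj)]
    rw [IsRightDescent] at hdesc
    omega

variable {cs} in
theorem IsReduced.isLeftDescent_of_cons {i : B} {ω : List B} (h : cs.IsReduced (i :: ω)) :
    cs.IsLeftDescent (π (i :: ω)) i := by
  have hle := cs.length_wordProd_le ω
  rw [IsLeftDescent, h, wordProd_cons, simple_mul_simple_cancel_left, List.length_cons]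
  omega

variable {cs} in
theorem IsReduced.isRightDescent_of_append_singleton {i : B} {ω : List B}
    (h : cs.IsReduced (ω ++ [i])) : cs.IsRightDescent (π (ω ++ [i])) i := by
  have hle := cs.length_wordProd_le ω
  rw [IsRightDescent, h, wordProd_append, wordProd_singleton, simple_mul_simple_cancel_right,
    List.length_append, List.length_singleton]
  omega

theorem isRightInversion_of_forall_length_le {w₀ : W} (hw₀ : ∀ v, ℓ v ≤ ℓ w₀) {t : W}
    (ht : cs.IsReflection t) : cs.IsRightInversion w₀ t :=
  ⟨ht, lt_of_le_of_ne (hw₀ _) (ht.length_mul_left_ne w₀)⟩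

section LongestElement

open Classical

variable [Fintype W] {w₀ : W}

theorem length_add_length_inv_mul_of_forall_length_le (hw₀ : ∀ v, ℓ v ≤ ℓ w₀) (u : W) :
    ℓ u + ℓ (u⁻¹ * w₀) = ℓ w₀ := by
  set x := u⁻¹ * w₀
  have hinv : ∀ t, cs.IsRightInversion x t ↔
      cs.IsReflection t ∧ ¬ cs.IsRightInversion u (x * t * x⁻¹) := fun t ↦ by
    by_cases ht : cs.IsReflection t
    · have hsum : cs.invParity x t + cs.invParity u (x * t * x⁻¹) = 1 := by
        rw [add_comm, ← invParity_mul, show u * x = w₀ by simp [x], invParity_eq_one_iff]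
        exact cs.isRightInversion_of_forall_length_le hw₀ ht
      simpa only [ht, true_and, ← invParity_eq_one_iff] using
        ZMod.eq_one_iff_ne_one_of_add_eq_one hsum
    · exact iff_of_false (fun h ↦ ht h.1) (fun h ↦ ht h.1)
  have hw₀ : #{t | cs.IsRightInversion w₀ t} = #{t | cs.IsReflection t} := by
    congr 1
    ext t
    simpa using ⟨fun h ↦ h.1, cs.isRightInversion_of_forall_length_le hw₀⟩
  have hconj : #{t | cs.IsReflection t ∧ ¬ cs.IsRightInversion u (x * t * x⁻¹)} =
      #{t | cs.IsReflection t ∧ ¬ cs.IsRightInversion u t} :=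
    card_equiv (MulAut.conj x).toEquiv fun t ↦ by simp [isReflection_conj_iff]
  have hsplit : #{t | cs.IsRightInversion u t} +
      #{t | cs.IsReflection t ∧ ¬ cs.IsRightInversion u t} = #{t | cs.IsReflection t} := by
    conv_rhs => rw [← card_filter_add_card_filter_not (cs.IsRightInversion u), filter_filter,
      filter_filter]
    congr 2
    ext t
    simpa using fun h ↦ h.1
  rw [← cs.card_isRightInversion, ← cs.card_isRightInversion, ← cs.card_isRightInversion, hw₀,
    ← hsplit, ← hconj]
  simp only [hinv]

theorem eq_of_forall_length_le_of_forall_isRightDescent (hw₀ : ∀ v, ℓ v ≤ ℓ w₀) {u : W}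
    (hu : ∀ i, cs.IsRightDescent u i) : u = w₀ := by
  by_contra hne
  obtain ⟨j, hj⟩ := cs.exists_leftDescent_of_ne_one (w := u⁻¹ * w₀) (by
    rwa [Ne, inv_mul_eq_one])
  have h₁ := cs.length_add_length_inv_mul_of_forall_length_le hw₀ u
  have h₂ := cs.length_add_length_inv_mul_of_forall_length_le hw₀ (u * s j)
  rw [mul_inv_rev, inv_simple, mul_assoc] at h₂
  have := hu j
  rw [IsLeftDescent] at hj
  rw [IsRightDescent] at this
  omega

theorem card_forall_isLeftDescent_and_isRightDescent :
    #{u : W | (∀ i, cs.IsLeftDescent u i) ∧ ∀ i, cs.IsRightDescent u i} = 1 := by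
  obtain ⟨w₀, -, hw₀⟩ := exists_max_image univ cs.length univ_nonempty
  replace hw₀ : ∀ v, ℓ v ≤ ℓ w₀ := fun v ↦ hw₀ v (mem_univ v)
  rw [card_eq_one]
  refine ⟨w₀, eq_singleton_iff_unique_mem.mpr ⟨?_, fun u hu ↦ ?_⟩⟩
  · rw [mem_filter_univ]
    exact ⟨fun i ↦ lt_of_le_of_ne (hw₀ _) (cs.length_simple_mul_ne w₀ i),
      fun i ↦ lt_of_le_of_ne (hw₀ _) (cs.length_mul_simple_ne w₀ i)⟩
  · exact cs.eq_of_forall_length_le_of_forall_isRightDescent hw₀ (mem_filter.mp hu).2.2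

end LongestElement

/-- The standard parabolic subgroup `W_I`. -/
def parabolic (I : Set B) : Subgroup W :=
  Subgroup.closure (cs.simple '' I)

theorem simple_mem_parabolic {I : Set B} {i : B} (hi : i ∈ I) : s i ∈ cs.parabolic I :=
  Subgroup.subset_closure ⟨i, hi, rfl⟩

theorem parabolic_empty : cs.parabolic ∅ = ⊥ := by
  simp [parabolic]

theorem exists_wordProd_eq_of_mem_parabolic {I : Set B} {x : W} (hx : x ∈ cs.parabolic I) :
    ∃ ω : List B, (∀ i ∈ ω, i ∈ I) ∧ π ω = x := by
  induction hx using Subgroup.closure_induction with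
  | mem x hx =>
    obtain ⟨i, hi, rfl⟩ := hx
    exact ⟨[i], by simpa using hi, wordProd_singleton cs i⟩
  | one => exact ⟨[], by simp, wordProd_nil cs⟩
  | mul x y _ _ hx hy =>
    obtain ⟨α, hα, rfl⟩ := hx
    obtain ⟨β, hβ, rfl⟩ := hy
    exact ⟨α ++ β, fun i hi ↦ (List.mem_append.mp hi).elim (hα i) (hβ i), wordProd_append cs α β⟩
  | inv x _ hx =>
    obtain ⟨α, hα, rfl⟩ := hx
    exact ⟨α.reverse, fun i hi ↦ hα i (List.mem_reverse.mp hi), wordProd_reverse cs α⟩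

/-- Each double coset `W_I u W_K` contains exactly one such element, its element of minimal
length. -/
def IsDistinguished (I K : Set B) (u : W) : Prop :=
  (∀ i ∈ I, ¬ cs.IsLeftDescent u i) ∧ ∀ k ∈ K, ¬ cs.IsRightDescent u k

variable {cs} in
open DoubleCoset in
/-- A reduced subword of `α ++ ω ++ β`, for words `α`, `β` of `a ∈ W_I`, `b ∈ W_K`, can keep no
letter of `α` or `β` when its product `a * x * b` is distinguished. -/
theorem IsDistinguished.exists_sublist_wordProd_eq {I K : Set B} {u x : W}
    (hu : cs.IsDistinguished I K u) (hx : u ∈ doubleCoset x (cs.parabolic I) (cs.parabolic K))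
    (ω : List B) (hω : π ω = x) : ∃ δ, δ.Sublist ω ∧ cs.IsReduced δ ∧ π δ = u := by
  obtain ⟨a, ha, b, hb, rfl⟩ := mem_doubleCoset.mp hx
  obtain ⟨α, hαI, rfl⟩ := cs.exists_wordProd_eq_of_mem_parabolic ha
  obtain ⟨β, hβK, rfl⟩ := cs.exists_wordProd_eq_of_mem_parabolic hb
  obtain ⟨ς, hς, hred, hπ⟩ := cs.exists_sublist_isReduced_wordProd_eq (α ++ (ω ++ β))
  rw [wordProd_append, wordProd_append, hω, ← mul_assoc] at hπ
  obtain ⟨ς₁, ς', rfl, hς₁, hς'⟩ := List.sublist_append_iff.mp hς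
  obtain ⟨ς₂, ς₃, rfl, hς₂, hς₃⟩ := List.sublist_append_iff.mp hς'
  obtain rfl : ς₁ = [] := by
    rcases ς₁ with _ | ⟨i, ς₁⟩
    · rfl
    rw [List.cons_append] at hred hπ
    exact (hu.1 i (hαI i (hς₁.subset List.mem_cons_self)) (hπ ▸ hred.isLeftDescent_of_cons)).elim
  obtain rfl : ς₃ = [] := by
    rcases List.eq_nil_or_concat' ς₃ with h | ⟨ς₃, k, rfl⟩
    · exact h
    rw [List.nil_append, ← List.append_assoc] at hred hπ
    exact (hu.2 k (hβK k (hς₃.subset (by simp)))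
      (hπ ▸ hred.isRightDescent_of_append_singleton)).elim
  exact ⟨ς₂, hς₂, by simpa using hred, by simpa using hπ⟩

variable {cs} in
open DoubleCoset in
theorem IsDistinguished.eq_of_mem_doubleCoset {I K : Set B} {u v : W}
    (hu : cs.IsDistinguished I K u) (hv : cs.IsDistinguished I K v)
    (h : v ∈ doubleCoset u (cs.parabolic I) (cs.parabolic K)) : v = u := by
  obtain ⟨ω, hω, rfl⟩ := cs.exists_isReduced u
  obtain ⟨δ, hδω, hδ, rfl⟩ := hv.exists_sublist_wordProd_eq h ω rfl
  have h' : π ω ∈ doubleCoset (π δ) (cs.parabolic I) (cs.parabolic K) := by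
    rw [doubleCoset_eq_of_mem h]
    exact mem_doubleCoset_self _ _ _
  obtain ⟨ω', hω'δ, hω', hπ⟩ := hu.exists_sublist_wordProd_eq h' δ rfl
  have hlen : ω'.length = ω.length := by rw [← hω', ← hω, hπ]
  rw [hδω.eq_of_length (le_antisymm hδω.length_le (hlen ▸ hω'δ.length_le))]

open DoubleCoset in
theorem existsUnique_isDistinguished_mem_doubleCoset (I K : Set B) (u : W) :
    ∃! d, cs.IsDistinguished I K d ∧ d ∈ doubleCoset u (cs.parabolic I) (cs.parabolic K) := by
  obtain ⟨d, hdu, hmin⟩ := (measure cs.length).wf.has_min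
    (doubleCoset u (cs.parabolic I) (cs.parabolic K)) ⟨u, mem_doubleCoset_self _ _ u⟩
  obtain ⟨a, ha, b, hb, rfl⟩ := mem_doubleCoset.mp hdu
  have hd : cs.IsDistinguished I K (a * u * b) := by
    refine ⟨fun i hi hdesc ↦ hmin _ ?_ hdesc, fun k hk hdesc ↦ hmin _ ?_ hdesc⟩
    · exact mem_doubleCoset.mpr
        ⟨s i * a, mul_mem (cs.simple_mem_parabolic hi) ha, b, hb, by simp [mul_assoc]⟩
    · exact mem_doubleCoset.mpr
        ⟨a, ha, b * s k, mul_mem hb (cs.simple_mem_parabolic hk), by simp [mul_assoc]⟩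
  refine ⟨a * u * b, ⟨hd, hdu⟩, fun v ⟨hv, hvu⟩ ↦ hd.eq_of_mem_doubleCoset hv ?_⟩
  rwa [doubleCoset_eq_of_mem hdu]

section Solomon

open Classical

variable [Fintype W]

omit [Fintype W] in
theorem neg_one_pow_length_mul {R : Type*} [CommRing R] (u v : W) :
    (-1 : R) ^ ℓ (u * v) = (-1) ^ ℓ u * (-1) ^ ℓ v := by
  rw [neg_one_pow_eq_pow_mod_two, cs.length_mul_mod_two, ← neg_one_pow_eq_pow_mod_two, pow_add]

omit [Fintype W] in
theorem neg_one_pow_length_conj {R : Type*} [CommRing R] (g x : W) :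
    (-1 : R) ^ ℓ (g * x * g⁻¹) = (-1) ^ ℓ x := by
  rw [neg_one_pow_length_mul, neg_one_pow_length_mul, length_inv, mul_comm, ← mul_assoc, ← pow_add,
    ← two_mul, pow_mul, neg_one_sq, one_pow, one_mul]

theorem sum_neg_one_pow_length_parabolic {R : Type*} [CommRing R] {I : Set B} (hI : I.Nonempty) :
    ∑ x with x ∈ cs.parabolic I, (-1 : R) ^ ℓ x = 0 := by
  obtain ⟨i, hi⟩ := hI
  refine sum_involution (fun x _ ↦ s i * x) (fun x _ ↦ ?_) (fun x _ _ ↦ ?_) (fun x hx ↦ ?_)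
    (fun x _ ↦ simple_mul_simple_cancel_left cs i)
  · rw [neg_one_pow_length_mul, length_simple]
    ring
  · intro h
    simpa [mul_eq_right.mp h] using cs.length_simple i
  · simpa using mul_mem (cs.simple_mem_parabolic hi) (mem_filter.mp hx).2

variable [Fintype B]

/-- Solomon's alternating sum `∑_{I ⊆ S} (-1)^|I| Ind_{W_I}^W 1` of permutation characters. -/
noncomputable def solomonChar (w : W) : ℚ :=
  ∑ I : Finset B,
    (-1) ^ #I * ((Nat.card (cs.parabolic I) : ℚ)⁻¹ * #{g | g⁻¹ * w * g ∈ cs.parabolic I})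

theorem sum_solomonChar_mul_neg_one_pow_length :
    ∑ w, cs.solomonChar w * (-1) ^ ℓ w = Fintype.card W := by
  calc ∑ w, cs.solomonChar w * (-1) ^ ℓ w
      = ∑ I : Finset B, (-1) ^ #I * ((Nat.card (cs.parabolic I) : ℚ)⁻¹ *
          ∑ w, (#{g | g⁻¹ * w * g ∈ cs.parabolic I} : ℚ) * (-1) ^ ℓ w) := by
        simp only [solomonChar, sum_mul, mul_sum]
        rw [sum_comm]
        exact sum_congr rfl fun I _ ↦ sum_congr rfl fun w _ ↦ by ring
    _ = Fintype.card W := by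
        simp_rw [sum_card_conj_mem_mul _ (fun x ↦ (-1 : ℚ) ^ ℓ x) cs.neg_one_pow_length_conj]
        rw [sum_eq_single ∅ (fun I _ hI ↦ ?_) (by simp)]
        · simp [parabolic_empty, sum_filter]
        · rw [cs.sum_neg_one_pow_length_parabolic
            (coe_nonempty.mpr (nonempty_iff_ne_empty.mpr hI))]
          simp

theorem sum_sum_neg_one_pow_card_mul_card_isDistinguished :
    ∑ I : Finset B, ∑ K : Finset B,
      (-1 : ℤ) ^ #I * (-1) ^ #K * #{u | cs.IsDistinguished I K u} = 1 := by
  calc _ = ∑ u, (∑ I : Finset B, (-1 : ℤ) ^ #I * if ∀ i ∈ I, ¬ cs.IsLeftDescent u i then 1 else 0) *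
          ∑ K : Finset B, (-1 : ℤ) ^ #K * if ∀ k ∈ K, ¬ cs.IsRightDescent u k then 1 else 0 := by
        simp_rw [sum_mul_sum, card_filter, Nat.cast_sum, mul_sum]
        conv_rhs => rw [sum_comm]; enter [2, I]; rw [sum_comm]
        refine sum_congr rfl fun I _ ↦ sum_congr rfl fun K _ ↦ sum_congr rfl fun u _ ↦ ?_
        simp only [IsDistinguished, mem_coe]
        split_ifs <;> simp_all
    _ = #{u : W | (∀ i, cs.IsLeftDescent u i) ∧ ∀ i, cs.IsRightDescent u i} := by
        simp only [sum_neg_one_pow_card_mul_ite_forall_not, ite_zero_mul_ite_zero, mul_one]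
        rw [card_filter]
        push_cast
        rfl
    _ = 1 := by
        rw [Nat.cast_eq_one]
        convert cs.card_forall_isLeftDescent_and_isRightDescent

theorem sum_solomonChar_sq : ∑ w, cs.solomonChar w ^ 2 = Fintype.card W := by
  calc ∑ w, cs.solomonChar w ^ 2
      = ∑ I : Finset B, ∑ K : Finset B, (-1) ^ #I * (-1) ^ #K *
          ((Nat.card (cs.parabolic I) : ℚ)⁻¹ * (Nat.card (cs.parabolic K) : ℚ)⁻¹ *
            ∑ w, (#{g | g⁻¹ * w * g ∈ cs.parabolic I} : ℚ) * #{g | g⁻¹ * w * g ∈ cs.parabolic K}) := by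
        simp_rw [solomonChar, sq, sum_mul_sum, mul_sum]
        rw [sum_comm]
        refine sum_congr rfl fun I _ ↦ ?_
        rw [sum_comm]
        exact sum_congr rfl fun K _ ↦ sum_congr rfl fun w _ ↦ by ring
    _ = Fintype.card W * ((∑ I : Finset B, ∑ K : Finset B,
          (-1 : ℤ) ^ #I * (-1) ^ #K * #{u | cs.IsDistinguished I K u} : ℤ) : ℚ) := by
        push_cast
        rw [mul_sum]
        refine sum_congr rfl fun I _ ↦ ?_
        rw [mul_sum]
        refine sum_congr rfl fun K _ ↦ ?_
        have hN := sum_card_conj_mem_mul_card_conj_mem _ _ _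
          (cs.existsUnique_isDistinguished_mem_doubleCoset I K)
        rw [← Nat.cast_inj (R := ℚ)] at hN
        push_cast at hN
        rw [hN]
        have hI : (Nat.card (cs.parabolic I) : ℚ) ≠ 0 := Nat.cast_ne_zero.mpr Nat.card_pos.ne'
        have hK : (Nat.card (cs.parabolic K) : ℚ) ≠ 0 := Nat.cast_ne_zero.mpr Nat.card_pos.ne'
        field_simp
    _ = Fintype.card W := by
        rw [cs.sum_sum_neg_one_pow_card_mul_card_isDistinguished, Int.cast_one, mul_one]

theorem solomonChar_eq_neg_one_pow_length (w : W) : cs.solomonChar w = (-1) ^ ℓ w := by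
  have hsq : ∑ v, (cs.solomonChar v - (-1) ^ ℓ v) ^ 2 = 0 := by
    simp_rw [sub_sq, sum_add_distrib, sum_sub_distrib, mul_assoc, ← mul_sum, ← pow_mul,
      mul_comm (ℓ _) 2, pow_mul, neg_one_sq, one_pow, sum_const, card_univ, nsmul_eq_mul, mul_one,
      sum_solomonChar_sq, sum_solomonChar_mul_neg_one_pow_length]
    ring
  have := (sum_eq_zero_iff_of_nonneg fun v _ ↦ sq_nonneg _).mp hsq w (mem_univ w)
  rwa [sq_eq_zero_iff, sub_eq_zero] at this

end Solomon

end CoxeterSystem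

open Classical in
theorem DL_character_eq_sign_tensor_character_general
    {B W : Type*} [Group W] {M : CoxeterMatrix B}
    (cs : CoxeterSystem M W) [Fintype B] [Fintype W]
    (V : Type*) [AddCommGroup V] [Module ℂ V]
    (ρ : Representation ℂ W V) (w : W) :
    ∑ I : Finset B,
        (-1 : ℂ) ^ I.card *
          ((Nat.card ↥(Subgroup.closure (cs.simple '' (I : Set B))) : ℂ)⁻¹ *
            ∑ g : W,
              if g⁻¹ * w * g ∈ Subgroup.closure (cs.simple '' (I : Set B)) then
                LinearMap.trace ℂ V (ρ (g⁻¹ * w * g))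
              else 0) =
      (-1 : ℂ) ^ cs.length w * LinearMap.trace ℂ V (ρ w) := by
  have hclass (g : W) : LinearMap.trace ℂ V (ρ (g⁻¹ * w * g)) = LinearMap.trace ℂ V (ρ w) := by
    simpa only [inv_inv, Representation.character] using ρ.char_conj w g⁻¹
  have hinduced (I : Finset B) :
      (∑ g : W, if g⁻¹ * w * g ∈ cs.parabolic I then LinearMap.trace ℂ V (ρ (g⁻¹ * w * g)) else 0) =
        #{g | g⁻¹ * w * g ∈ cs.parabolic I} * LinearMap.trace ℂ V (ρ w) := by
    simp_rw [hclass, ← sum_filter, sum_const, nsmul_eq_mul]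
  have hsolomon := congrArg (Rat.cast : ℚ → ℂ) (cs.solomonChar_eq_neg_one_pow_length w)
  push_cast [CoxeterSystem.solomonChar] at hsolomon
  have hparabolic (I : Finset B) : Subgroup.closure (cs.simple '' I) = cs.parabolic I := rfl
  simp_rw [hparabolic, hinduced, ← hsolomon, sum_mul]
  exact sum_congr rfl fun I _ ↦ by ring

open Classical in
/-- Let `(W, S)` be a Coxeter system with `W` finite, and let `V` be a
finite-dimensional complex representation of `W` with character `χ_V`. Then the virtual
character `∑_{I ⊆ S} (-1)^|I| Ind_{W_I}^W (χ_V |_{W_I})` equals the character of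
`sgn ⊗ V`; that is, for every `w ∈ W`,
`∑_{I ⊆ S} (-1)^|I| (1/|W_I|) ∑_{g : g⁻¹wg ∈ W_I} χ_V (g⁻¹wg) = (-1)^(ℓ w) * χ_V w`. -/
theorem DL_character_eq_sign_tensor_character
    {B W : Type*} [Group W] {M : CoxeterMatrix B}
    (cs : CoxeterSystem M W) [Fintype B] [Fintype W]
    (V : Type*) [AddCommGroup V] [Module ℂ V] [FiniteDimensional ℂ V]
    (ρ : Representation ℂ W V) (w : W) :
    ∑ I : Finset B,
        (-1 : ℂ) ^ I.card *
          ((Nat.card ↥(Subgroup.closure (cs.simple '' (I : Set B))) : ℂ)⁻¹ *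
            ∑ g : W,
              if g⁻¹ * w * g ∈ Subgroup.closure (cs.simple '' (I : Set B)) then
                LinearMap.trace ℂ V (ρ (g⁻¹ * w * g))
              else 0) =
      (-1 : ℂ) ^ cs.length w * LinearMap.trace ℂ V (ρ w) :=
  DL_character_eq_sign_tensor_character_general cs V ρ w
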